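/- arXiv:1006.3693 — 4 statements merged into one kernel-verified Lean document; each statement's English description precedes it below -/
import Mathlib

section
/- Let 𝔨 be a Lie algebra with an invariant nondegenerate symmetric bilinear form ⟨·,·⟩, and let f, g : 𝔨 → ℝ be smooth Ad-invariant functions, meaning [∇f(ξ), ξ] = 0 and [∇g(ξ), ξ] = 0 for all ξ. For indices 1 ≤ i < j ≤ n−1 and parameters t₁, t₂ ∈ ℝ define on 𝔤 = 𝔨ⁿ the functions F(x) = f(x₁+⋯+xᵢ+t₁x_{i+1}) and G(x) = g(x₁+⋯+x_j+t₂x_{j+1}). Then the product Lie–Poisson bracket {F,G}(x) = −Σ_k ⟨x_k, [∇_{x_k}F, ∇_{x_k}G]⟩ vanishes identically. -/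
open scoped BigOperators

/-- Shifted invariants associated to different members of the flag commute.
`𝔨` is a Lie algebra with invariant symmetric nondegenerate form `B`; the smooth
functions `f, g : 𝔨 → ℝ` have gradients `gradf, gradg` with respect to `B`
(Gateaux characterization) which satisfy the infinitesimal Ad-invariance
`[∇f(ξ), ξ] = 0`, `[∇g(ξ), ξ] = 0`.  For `1 ≤ i < j ≤ n-1` (0-based: the shifted
indices are `i < j < n`, `1 ≤ i`), set `F(x) = f(x₁+⋯+xᵢ+t₁x_{i+1})`,
`G(x) = g(x₁+⋯+x_j+t₂x_{j+1})`.  By the chain rule `∇_{x_m}F` equals `∇f(y₁)` for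
`m < i`, `t₁∇f(y₁)` for `m = i`, and `0` otherwise (similarly for `G`), and the
product Lie–Poisson bracket `{F,G}(x) = -∑ₘ ⟨xₘ, [∇ₘF, ∇ₘG]⟩` vanishes. -/
theorem shifted_invariants_commute_different_indices
    {𝔨 : Type*} [LieRing 𝔨] [LieAlgebra ℝ 𝔨]
    (B : LinearMap.BilinForm ℝ 𝔨)
    (hsymm : ∀ a b : 𝔨, B a b = B b a)
    (hnd : B.Nondegenerate)
    (hinv : ∀ a b c : 𝔨, B ⁅a, b⁆ c = B a ⁅b, c⁆)
    (f g : 𝔨 → ℝ) (gradf gradg : 𝔨 → 𝔨)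
    (hgf : ∀ ξ v : 𝔨, HasDerivAt (fun ε : ℝ => f (ξ + ε • v)) (B (gradf ξ) v) 0)
    (hgg : ∀ ξ v : 𝔨, HasDerivAt (fun ε : ℝ => g (ξ + ε • v)) (B (gradg ξ) v) 0)
    (hfinv : ∀ ξ : 𝔨, ⁅gradf ξ, ξ⁆ = 0)
    (hginv : ∀ ξ : 𝔨, ⁅gradg ξ, ξ⁆ = 0)
    (n i j : ℕ) (hi : 1 ≤ i) (hij : i < j) (hj : j < n)
    (t₁ t₂ : ℝ) (x : Fin n → 𝔨) :
    -∑ m : Fin n, B (x m)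
        ⁅(if (m : ℕ) < i then
            gradf ((∑ l ∈ Finset.univ.filter fun l : Fin n => (l : ℕ) < i, x l)
              + t₁ • x ⟨i, hij.trans hj⟩)
          else if (m : ℕ) = i then
            t₁ • gradf ((∑ l ∈ Finset.univ.filter fun l : Fin n => (l : ℕ) < i, x l)
              + t₁ • x ⟨i, hij.trans hj⟩)
          else 0),
         (if (m : ℕ) < j then
            gradg ((∑ l ∈ Finset.univ.filter fun l : Fin n => (l : ℕ) < j, x l)
              + t₂ • x ⟨j, hj⟩)
          else if (m : ℕ) = j then
            t₂ • gradg ((∑ l ∈ Finset.univ.filter fun l : Fin n => (l : ℕ) < j, x l)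
              + t₂ • x ⟨j, hj⟩)
          else 0)⁆ = 0 := by
  set ξ₁ := (∑ l ∈ Finset.univ.filter fun l : Fin n => (l : ℕ) < i, x l)
      + t₁ • x ⟨i, hij.trans hj⟩ with hξ₁
  set ξ₂ := (∑ l ∈ Finset.univ.filter fun l : Fin n => (l : ℕ) < j, x l)
      + t₂ • x ⟨j, hj⟩ with hξ₂
  set a := gradf ξ₁ with ha
  set b := gradg ξ₂ with hb
  have step : ∀ m : Fin n, B (x m)
      ⁅(if (m : ℕ) < i then a else if (m : ℕ) = i then t₁ • a else 0),
       (if (m : ℕ) < j then b else if (m : ℕ) = j then t₂ • b else 0)⁆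
      = B ((if (m : ℕ) < i then x m else 0)
          + (if (m : ℕ) = i then t₁ • x m else 0)) ⁅a, b⁆ := by
    intro m
    by_cases h1 : (m : ℕ) < i
    · have h2 : (m : ℕ) < j := h1.trans hij
      have h3 : (m : ℕ) ≠ i := Nat.ne_of_lt h1
      simp [h1, h2, h3, hsymm (x m) ⁅a, b⁆]
    · by_cases h4 : (m : ℕ) = i
      · have h2 : (m : ℕ) < j := h4 ▸ hij
        simp only [if_neg h1, if_pos h4, if_pos h2, smul_lie, zero_add,
          map_smul, LinearMap.smul_apply]
      · simp [h1, h4]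
  have hv : ∑ m : Fin n, ((if (m : ℕ) < i then x m else 0)
      + (if (m : ℕ) = i then t₁ • x m else 0)) = ξ₁ := by
    rw [Finset.sum_add_distrib, hξ₁, ← Finset.sum_filter]
    congr 1
    have hcond : ∀ m : Fin n, ((m : ℕ) = i) = (m = ⟨i, hij.trans hj⟩) := by
      intro m
      simp [Fin.ext_iff]
    simp only [hcond]
    rw [Finset.sum_ite_eq' Finset.univ (⟨i, hij.trans hj⟩ : Fin n)
      (fun m => t₁ • x m)]
    simp
  have hsum : ∑ m : Fin n, B (x m)
      ⁅(if (m : ℕ) < i then a else if (m : ℕ) = i then t₁ • a else 0),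
       (if (m : ℕ) < j then b else if (m : ℕ) = j then t₂ • b else 0)⁆
      = B ξ₁ ⁅a, b⁆ := by
    rw [Finset.sum_congr rfl fun m _ => step m, ← hv,
      LinearMap.BilinForm.sum_left]
  rw [hsum, ← hinv ξ₁ a b]
  have h0 : ⁅ξ₁, a⁆ = 0 := by
    have h := hfinv ξ₁
    rw [← lie_skew] at h
    exact neg_eq_zero.mp h
  rw [h0]
  simp
end

section
/- Let 𝔨 be a Lie algebra with an invariant nondegenerate symmetric bilinear form, and let f, g : 𝔨 → ℝ be smooth functions with [∇f(ξ),ξ] = 0 and [∇g(ξ),ξ] = 0 for all ξ. For a fixed index i and parameters t₁, t₂, set F(x) = f(x₁+⋯+xᵢ+t₁x_{i+1}) and G(x) = g(x₁+⋯+xᵢ+t₂x_{i+1}) on 𝔨ⁿ. Then {F,G}(x) = t₁⟨x₁+⋯+xᵢ+x_{i+1}, [∇f(x₁+⋯+xᵢ+t₁x_{i+1}), ∇g(x₁+⋯+xᵢ+t₂x_{i+1})]⟩, and the same quantity also equals t₂ times the same pairing; consequently {F,G} = 0 whenever t₁ ≠ t₂. -/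
open scoped BigOperators

/-- For a single index `i` and parameters `t₁, t₂`, with `F(x) = f(x₁+⋯+xᵢ+t₁x_{i+1})`,
`G(x) = g(x₁+⋯+xᵢ+t₂x_{i+1})` (gradients computed by the chain rule), the product
Lie–Poisson bracket satisfies
`{F,G}(x) = t₁⟨x₁+⋯+x_{i+1}, [∇f(y₁), ∇g(y₂)]⟩ = t₂⟨x₁+⋯+x_{i+1}, [∇f(y₁), ∇g(y₂)]⟩`,
hence `{F,G}(x) = 0` whenever `t₁ ≠ t₂`.  (0-based indices: the shifted coordinate
has index `i < n`, `1 ≤ i`.) -/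
theorem shifted_invariants_bracket_same_index
    {𝔨 : Type*} [LieRing 𝔨] [LieAlgebra ℝ 𝔨]
    (B : LinearMap.BilinForm ℝ 𝔨)
    (hsymm : ∀ a b : 𝔨, B a b = B b a)
    (hnd : B.Nondegenerate)
    (hinv : ∀ a b c : 𝔨, B ⁅a, b⁆ c = B a ⁅b, c⁆)
    (f g : 𝔨 → ℝ) (gradf gradg : 𝔨 → 𝔨)
    (hgf : ∀ ξ v : 𝔨, HasDerivAt (fun ε : ℝ => f (ξ + ε • v)) (B (gradf ξ) v) 0)
    (hgg : ∀ ξ v : 𝔨, HasDerivAt (fun ε : ℝ => g (ξ + ε • v)) (B (gradg ξ) v) 0)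
    (hfinv : ∀ ξ : 𝔨, ⁅gradf ξ, ξ⁆ = 0)
    (hginv : ∀ ξ : 𝔨, ⁅gradg ξ, ξ⁆ = 0)
    (n i : ℕ) (h1 : 1 ≤ i) (hi : i < n) (t₁ t₂ : ℝ) (x : Fin n → 𝔨) :
    let y₁ := (∑ l ∈ Finset.univ.filter fun l : Fin n => (l : ℕ) < i, x l)
                + t₁ • x ⟨i, hi⟩
    let y₂ := (∑ l ∈ Finset.univ.filter fun l : Fin n => (l : ℕ) < i, x l)
                + t₂ • x ⟨i, hi⟩
    let bracket := -∑ m : Fin n, B (x m)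
        ⁅(if (m : ℕ) < i then gradf y₁ else if (m : ℕ) = i then t₁ • gradf y₁ else 0),
         (if (m : ℕ) < i then gradg y₂ else if (m : ℕ) = i then t₂ • gradg y₂ else 0)⁆
    let P := B ((∑ l ∈ Finset.univ.filter fun l : Fin n => (l : ℕ) < i, x l) + x ⟨i, hi⟩)
        ⁅gradf y₁, gradg y₂⁆
    bracket = t₁ * P ∧ bracket = t₂ * P ∧ (t₁ ≠ t₂ → bracket = 0) := by
  intro y₁ y₂ bracket P
  set S : 𝔨 := ∑ l ∈ Finset.univ.filter fun l : Fin n => (l : ℕ) < i, x l with hS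
  set xi : 𝔨 := x ⟨i, hi⟩ with hxi
  set A : 𝔨 := gradf y₁ with hA
  set C : 𝔨 := gradg y₂ with hC
  set Q : ℝ := B xi ⁅A, C⁆ with hQ
  -- consequences of Ad-invariance of f and g
  have hAS : ⁅A, S⁆ = -(t₁ • ⁅A, xi⁆) := by
    have h' : ⁅A, S + t₁ • xi⁆ = 0 := hfinv y₁
    rw [lie_add, lie_smul] at h'
    exact eq_neg_of_add_eq_zero_left h'
  have hCS : ⁅C, S⁆ = -(t₂ • ⁅C, xi⁆) := by
    have h' : ⁅C, S + t₂ • xi⁆ = 0 := hginv y₂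
    rw [lie_add, lie_smul] at h'
    exact eq_neg_of_add_eq_zero_left h'
  have hQ1 : B A ⁅C, xi⁆ = Q := by
    rw [hQ, hsymm xi, hinv]
  have hQ2 : B A ⁅xi, C⁆ = -Q := by
    rw [← lie_skew xi C, map_neg, hQ1]
  have h1 : B S ⁅A, C⁆ = -(t₁ * Q) := by
    have hSA : ⁅S, A⁆ = t₁ • ⁅A, xi⁆ := by
      rw [← lie_skew S A, hAS, neg_neg]
    calc B S ⁅A, C⁆ = B ⁅S, A⁆ C := (hinv S A C).symm
      _ = t₁ * B ⁅A, xi⁆ C := by rw [hSA, map_smul, LinearMap.smul_apply, smul_eq_mul]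
      _ = t₁ * B A ⁅xi, C⁆ := by rw [hinv]
      _ = -(t₁ * Q) := by rw [hQ2]; ring
  have h2 : B S ⁅A, C⁆ = -(t₂ * Q) := by
    calc B S ⁅A, C⁆ = B ⁅A, C⁆ S := hsymm _ _
      _ = B A ⁅C, S⁆ := hinv _ _ _
      _ = -(t₂ * B A ⁅C, xi⁆) := by
            rw [hCS, map_neg, map_smul, smul_eq_mul]
      _ = -(t₂ * Q) := by rw [hQ1]
  -- evaluate the sum defining `bracket`
  have hterm : ∀ m : Fin n, B (x m)
      ⁅(if (m : ℕ) < i then A else if (m : ℕ) = i then t₁ • A else 0),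
       (if (m : ℕ) < i then C else if (m : ℕ) = i then t₂ • C else 0)⁆
      = (if (m : ℕ) < i then B (x m) ⁅A, C⁆ else 0)
        + (if m = (⟨i, hi⟩ : Fin n) then t₁ * (t₂ * Q) else 0) := by
    intro m
    by_cases h : (m : ℕ) < i
    · have hne : m ≠ (⟨i, hi⟩ : Fin n) := by
        intro he; rw [he] at h; exact absurd h (lt_irrefl i)
      simp [h, hne]
    · by_cases h' : (m : ℕ) = i
      · have he : m = (⟨i, hi⟩ : Fin n) := Fin.ext h'
        rw [if_neg h, if_neg h, if_pos h', if_pos h', if_neg h, if_pos he]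
        rw [smul_lie, lie_smul, map_smul, map_smul, smul_eq_mul, smul_eq_mul]
        rw [he, ← hxi, ← hQ, zero_add]
      · have hne : m ≠ (⟨i, hi⟩ : Fin n) := by
          intro he; exact h' (by rw [he])
        simp [h, h', hne]
  have hsum : bracket = -(B S ⁅A, C⁆ + t₁ * (t₂ * Q)) := by
    show -∑ m : Fin n, _ = _
    rw [Finset.sum_congr rfl fun m _ => hterm m, Finset.sum_add_distrib]
    congr 1
    congr 1
    · rw [hS, map_sum, LinearMap.sum_apply, Finset.sum_filter]
    · rw [Finset.sum_ite_eq' Finset.univ (⟨i, hi⟩ : Fin n) (fun _ => t₁ * (t₂ * Q))]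
      simp
  have hP : P = B S ⁅A, C⁆ + Q := by
    show B (S + xi) ⁅A, C⁆ = _
    rw [map_add, LinearMap.add_apply, hQ]
  refine ⟨?_, ?_, ?_⟩
  · rw [hsum, h1, hP, h2]; ring
  · rw [hsum, h2, hP, h1]; ring
  · intro hne
    have hQ0 : Q = 0 := by
      have h12 : -(t₁ * Q) = -(t₂ * Q) := h1 ▸ h2
      have : (t₁ - t₂) * Q = 0 := by linarith [h12]
      rcases mul_eq_zero.mp this with h | h
      · exact absurd (sub_eq_zero.mp h) hne
      · exact h
    rw [hsum, h1, hQ0]; ring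
end

section
/- Let 𝔨 be a Lie algebra with invariant nondegenerate symmetric bilinear form ⟨·,·⟩ and 𝔤 = 𝔨ⁿ with the product form; let 𝔥 ⊂ 𝔤 be the diagonal and 𝔳 = 𝔥^⊥. If f, g : 𝔤 → ℝ are smooth Ad_H-invariant functions (infinitesimally: pr_𝔥[∇f(x), x] type invariance, i.e., ⟨[x, η], ∇f(x)⟩ = 0 for all η ∈ 𝔥) and {f,g} = 0 for the product Lie–Poisson bracket on 𝔤, then their restrictions to 𝔳 satisfy {f|_𝔳, g|_𝔳}_𝔳 = 0, where {F,G}_𝔳(x) = −⟨x, [∇F(x), ∇G(x)]⟩ with gradients taken in 𝔳. -/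
open scoped BigOperators

/-- (Lemma on restriction.) If `f, g : 𝔤 = 𝔨ⁿ → ℝ` are smooth `Ad_H`-invariant
functions (infinitesimally, `⟨[x,η], ∇f(x)⟩ = 0` for every diagonal `η`) which
Poisson-commute for the product Lie–Poisson bracket, then their restrictions to
`𝔳 = {∑ xᵢ = 0}` commute for the bracket `{F,G}_𝔳(x) = -⟨x, [∇F(x), ∇G(x)]⟩`,
where the `𝔳`-gradient is `pr_𝔳` of the ambient gradient,
`pr_𝔳(y)ₘ = yₘ - (1/n)∑ⱼ yⱼ`. -/
theorem bracket_restriction_to_v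
    {𝔨 : Type*} [LieRing 𝔨] [LieAlgebra ℝ 𝔨]
    (B : LinearMap.BilinForm ℝ 𝔨)
    (hsymm : ∀ a b : 𝔨, B a b = B b a)
    (hnd : B.Nondegenerate)
    (hinv : ∀ a b c : 𝔨, B ⁅a, b⁆ c = B a ⁅b, c⁆)
    (n : ℕ) (hn : 0 < n)
    (f g : (Fin n → 𝔨) → ℝ) (gradf gradg : (Fin n → 𝔨) → Fin n → 𝔨)
    (hgf : ∀ (x v : Fin n → 𝔨),
      HasDerivAt (fun ε : ℝ => f (x + ε • v)) (∑ m, B (gradf x m) (v m)) 0)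
    (hgg : ∀ (x v : Fin n → 𝔨),
      HasDerivAt (fun ε : ℝ => g (x + ε • v)) (∑ m, B (gradg x m) (v m)) 0)
    (hfH : ∀ (x : Fin n → 𝔨) (η : 𝔨), ∑ m, B ⁅x m, η⁆ (gradf x m) = 0)
    (hgH : ∀ (x : Fin n → 𝔨) (η : 𝔨), ∑ m, B ⁅x m, η⁆ (gradg x m) = 0)
    (hcomm : ∀ x : Fin n → 𝔨, -∑ m, B (x m) ⁅gradf x m, gradg x m⁆ = 0)
    (x : Fin n → 𝔨) (hx : ∑ m, x m = 0) :
    -∑ m, B (x m)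
        ⁅gradf x m - (n : ℝ)⁻¹ • ∑ j, gradf x j,
         gradg x m - (n : ℝ)⁻¹ • ∑ j, gradg x j⁆ = 0 := by
  set A := (n : ℝ)⁻¹ • ∑ j, gradf x j with hA
  set C := (n : ℝ)⁻¹ • ∑ j, gradg x j with hC
  have key : ∀ m, B (x m) ⁅gradf x m - A, gradg x m - C⁆
      = B (x m) ⁅gradf x m, gradg x m⁆
        - B (x m) ⁅gradf x m, C⁆ - B (x m) ⁅A, gradg x m⁆
        + B (x m) ⁅A, C⁆ := by
    intro m
    rw [sub_lie, lie_sub, lie_sub]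
    simp only [map_sub, map_add]
    ring
  have t1 : ∑ m, B (x m) ⁅gradf x m, gradg x m⁆ = 0 := by
    have := hcomm x; linarith
  have t2 : ∑ m, B (x m) ⁅gradf x m, C⁆ = 0 := by
    have h := hfH x C
    have e : ∀ m, B (x m) ⁅gradf x m, C⁆ = - B ⁅x m, C⁆ (gradf x m) := by
      intro m
      rw [hinv, ← lie_skew C (gradf x m), map_neg, neg_neg]
    simp only [e]
    rw [Finset.sum_neg_distrib, h, neg_zero]
  have t3 : ∑ m, B (x m) ⁅A, gradg x m⁆ = 0 := by
    have h := hgH x A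
    have e : ∀ m, B (x m) ⁅A, gradg x m⁆ = B ⁅x m, A⁆ (gradg x m) := by
      intro m; rw [hinv]
    simp only [e]; exact h
  have t4 : ∑ m, B (x m) ⁅A, C⁆ = 0 := by
    simp only [← LinearMap.sum_apply, ← map_sum, hx, map_zero, LinearMap.zero_apply]
  simp only [key]
  rw [Finset.sum_add_distrib, Finset.sum_sub_distrib, Finset.sum_sub_distrib,
    t1, t2, t3, t4]
  ring
end

section
/- The Hamiltonian ĥ(x) = (s/2)⟨pr_𝔥 x, pr_𝔥 x⟩ + (p/2)⟨x − pr_𝔥 x − pr_{𝔳_{n−1}} x, x − pr_𝔥 x − pr_{𝔳_{n−1}} x⟩ + (q/2)⟨pr_{𝔳_{n−1}} x, pr_{𝔳_{n−1}} x⟩ on 𝔨ⁿ, where 𝔳_{n−1} = 𝔨_{ν^{n−1}} with ν^{n−1} = (1,…,1,−(n−1))/√(n²−n), equals (p/2)Σ_{k=1}^{n−1}⟨x_k,x_k⟩ + ½(qn/(n−1) − p/(n−1))⟨xₙ,xₙ⟩ + ½(s/n − p/(n−1) + q/(n²−n))⟨μ,μ⟩ + (p/(n−1) − q/(n−1))⟨μ,xₙ⟩,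 where μ = x₁+⋯+xₙ. -/
/-!
Both `𝔥` and `𝔳_{n-1}` are lines `𝔨_ν`, for the orthonormal vectors `ν⁰ = (1,…,1)/√n` and
`ν^{n-1}` of `ℝⁿ`. For a unit vector `ν`, `pr_{𝔨_ν} x = ν ⊗ w` with `w = ∑ⱼ νⱼ xⱼ`, so
`⟨x, pr x⟩ = ⟨pr x, pr x⟩ = ⟨w, w⟩`, and orthogonality of `ν⁰, ν^{n-1}` makes the two
projections orthogonal. By Pythagoras
`ĥ(x) = (p/2)⟨x,x⟩ + ((s-p)/2)⟨w⁰,w⁰⟩ + ((q-p)/2)⟨w,w⟩`, where `w⁰ = μ/√n` and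
`w = (μ - n xₙ)/√(n²-n)`; expanding gives the claimed formula.
-/

open Finset

section Pythagoras

variable {R V : Type*} [CommRing R] [AddCommGroup V] [Module R V]

theorem LinearMap.BilinForm.apply_sub_sub_of_orthogonal (β : LinearMap.BilinForm R V)
    (hβ : ∀ a b, β a b = β b a) {x u v : V} (hu : β x u = β u u) (hv : β x v = β v v)
    (huv : β u v = 0) :
    β (x - u - v) (x - u - v) = β x x - β u u - β v v := by
  simp only [map_sub, LinearMap.sub_apply]
  rw [hβ u x, hβ v x, hβ v u, hu, hv, huv]
  ring

end Pythagoras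

section LineProjection

variable {R 𝔨 ι : Type*} [CommRing R] [AddCommGroup 𝔨] [Module R 𝔨] [Fintype ι]

def LinearMap.BilinForm.pi (B : LinearMap.BilinForm R 𝔨) (ι : Type*) [Fintype ι] :
    LinearMap.BilinForm R (ι → 𝔨) :=
  ∑ i, B.compl₁₂ (LinearMap.proj i) (LinearMap.proj i)

@[simp]
theorem LinearMap.BilinForm.pi_apply (B : LinearMap.BilinForm R 𝔨) (x y : ι → 𝔨) :
    B.pi ι x y = ∑ i, B (x i) (y i) := by
  simp [LinearMap.BilinForm.pi]

/-- `pr_{𝔨_ν}`; it is the orthogonal projection onto `𝔨_ν` when `ν` is a unit vector. -/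
def lineProj (ν : ι → R) (x : ι → 𝔨) : ι → 𝔨 :=
  fun i => ν i • ∑ j, ν j • x j

namespace LinearMap.BilinForm

variable (B : LinearMap.BilinForm R 𝔨)

theorem pi_lineProj_lineProj (ν ν' : ι → R) (x : ι → 𝔨) :
    B.pi ι (lineProj ν x) (lineProj ν' x)
      = (∑ i, ν i * ν' i) * B (∑ j, ν j • x j) (∑ j, ν' j • x j) := by
  simp only [pi_apply, lineProj, smul_left, smul_right, sum_mul]
  exact sum_congr rfl fun i _ => by ring

theorem pi_lineProj_right (ν : ι → R) (x : ι → 𝔨) :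
    B.pi ι x (lineProj ν x) = B (∑ j, ν j • x j) (∑ j, ν j • x j) := by
  simp only [pi_apply, lineProj, smul_right, sum_left, smul_left]

theorem pi_sub_lineProj_sub_lineProj (hB : ∀ a b, B a b = B b a) {ν ν' : ι → R}
    (hν : ∑ i, ν i * ν i = 1) (hν' : ∑ i, ν' i * ν' i = 1) (hνν' : ∑ i, ν i * ν' i = 0)
    (x : ι → 𝔨) :
    B.pi ι (x - lineProj ν x - lineProj ν' x) (x - lineProj ν x - lineProj ν' x)
      = B.pi ι x x - B (∑ j, ν j • x j) (∑ j, ν j • x j)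
          - B (∑ j, ν' j • x j) (∑ j, ν' j • x j) := by
  have hpi : ∀ y z, B.pi ι y z = B.pi ι z y := fun y z => by
    simp only [pi_apply, hB (y _)]
  rw [apply_sub_sub_of_orthogonal _ hpi, pi_lineProj_lineProj, pi_lineProj_lineProj, hν, hν',
    one_mul, one_mul]
  · rw [pi_lineProj_right, pi_lineProj_lineProj, hν, one_mul]
  · rw [pi_lineProj_right, pi_lineProj_lineProj, hν', one_mul]
  · rw [pi_lineProj_lineProj, hνν', zero_mul]

end LinearMap.BilinForm

end LineProjection

section Spike

variable {R M ι : Type*} [CommRing R] [AddCommGroup M] [Module R M] [Fintype ι] [DecidableEq ι]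

theorem sum_mul_one_sub_ite_smul (c m : R) (L : ι) (x : ι → M) :
    ∑ j, (c * (1 - m * if j = L then 1 else 0)) • x j = c • (∑ j, x j - m • x L) := by
  simp [mul_sub, sub_smul, mul_smul, sum_sub_distrib, smul_sub, smul_sum]

theorem sum_mul_one_sub_ite (c m : R) (L : ι) :
    ∑ j, c * (1 - m * if j = L then 1 else 0) = c * (Fintype.card ι - m) := by
  simpa using sum_mul_one_sub_ite_smul c m L (fun _ => (1 : R))

theorem sum_mul_one_sub_ite_mul_self (c m : R) (L : ι) :
    ∑ j, (c * (1 - m * if j = L then 1 else 0)) * (c * (1 - m * if j = L then 1 else 0))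
      = c ^ 2 * (Fintype.card ι - 2 * m + m ^ 2) := by
  have := sum_mul_one_sub_ite_smul c m L (fun j => c * (1 - m * if j = L then 1 else 0))
  simp only [smul_eq_mul, ↓reduceIte] at this
  rw [this, sum_mul_one_sub_ite]
  ring

end Spike

theorem sum_eq_sum_filter_lt_pred_add {M : Type*} [AddCommMonoid M] {n : ℕ} (hn : 0 < n)
    (f : Fin n → M) :
    ∑ i, f i = ∑ i ∈ univ.filter fun i : Fin n => (i : ℕ) < n - 1, f i + f ⟨n - 1, by omega⟩ := by
  rw [← sum_filter_add_sum_filter_not univ fun i : Fin n => (i : ℕ) < n - 1]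
  congr 1
  convert sum_singleton f _
  ext i
  have := i.isLt
  simp only [mem_filter, mem_univ, true_and, not_lt, mem_singleton, Fin.ext_iff]
  omega

section UnitVectors

variable {𝔨 : Type*} [AddCommGroup 𝔨] [Module ℝ 𝔨] {n : ℕ}

/-- `ν^{n-1}`. -/
noncomputable def nuLast (n : ℕ) : Fin n → ℝ := fun i =>
  if (i : ℕ) < n - 1 then 1 / Real.sqrt ((n : ℝ) ^ 2 - n)
  else -((n : ℝ) - 1) / Real.sqrt ((n : ℝ) ^ 2 - n)

/-- The unit vector `ν` with `𝔥 = 𝔨_ν`. -/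
noncomputable def nuDiag (n : ℕ) : Fin n → ℝ := fun _ => (√(n : ℝ))⁻¹

theorem nuLast_eq (hn : 0 < n) :
    nuLast n = fun i =>
      (√((n : ℝ) ^ 2 - n))⁻¹ * (1 - n * if i = ⟨n - 1, by omega⟩ then 1 else 0) := by
  funext i
  by_cases hi : i = ⟨n - 1, by omega⟩
  · simp [nuLast, hi, div_eq_mul_inv]
    ring
  · have : (i : ℕ) < n - 1 := by
      have := i.isLt
      simp only [Fin.ext_iff] at hi
      omega
    simp [nuLast, hi, this]

theorem sum_nuLast (hn : 0 < n) : ∑ i, nuLast n i = 0 := by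
  rw [nuLast_eq hn, sum_mul_one_sub_ite, Fintype.card_fin, sub_self, mul_zero]

theorem sum_nuLast_mul_self (hn : 2 ≤ n) : ∑ i, nuLast n i * nuLast n i = 1 := by
  have hdisc : (0 : ℝ) < (n : ℝ) ^ 2 - n := by
    have : (2 : ℝ) ≤ n := by exact_mod_cast hn
    nlinarith
  rw [nuLast_eq (by omega), sum_mul_one_sub_ite_mul_self, Fintype.card_fin, inv_pow,
    Real.sq_sqrt hdisc.le, show (n : ℝ) - 2 * n + n ^ 2 = n ^ 2 - n by ring,
    inv_mul_cancel₀ hdisc.ne']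

theorem sum_nuDiag_mul_self (hn : n ≠ 0) : ∑ i, nuDiag n i * nuDiag n i = 1 := by
  simp [nuDiag, ← mul_inv, Real.mul_self_sqrt n.cast_nonneg, hn]

theorem sum_nuDiag_mul_nuLast (hn : 0 < n) : ∑ i, nuDiag n i * nuLast n i = 0 := by
  simp only [nuDiag]
  rw [← mul_sum, sum_nuLast hn, mul_zero]

theorem sum_nuDiag_smul (x : Fin n → 𝔨) :
    ∑ j, nuDiag n j • x j = (√(n : ℝ))⁻¹ • ∑ j, x j :=
  smul_sum.symm

theorem lineProj_nuDiag (x : Fin n → 𝔨) :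
    lineProj (nuDiag n) x = fun _ => (n : ℝ)⁻¹ • ∑ j, x j := by
  funext i
  rw [lineProj, sum_nuDiag_smul, nuDiag, smul_smul, ← mul_inv, Real.mul_self_sqrt n.cast_nonneg]

theorem sum_nuLast_smul (hn : 0 < n) (x : Fin n → 𝔨) :
    ∑ j, nuLast n j • x j
      = (√((n : ℝ) ^ 2 - n))⁻¹ • (∑ j, x j - (n : ℝ) • x ⟨n - 1, by omega⟩) := by
  rw [nuLast_eq hn]
  exact sum_mul_one_sub_ite_smul _ _ _ _

namespace LinearMap.BilinForm

variable (B : LinearMap.BilinForm ℝ 𝔨)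

theorem apply_sum_nuDiag_smul (x : Fin n → 𝔨) :
    B (∑ j, nuDiag n j • x j) (∑ j, nuDiag n j • x j)
      = (n : ℝ)⁻¹ * B (∑ j, x j) (∑ j, x j) := by
  rw [sum_nuDiag_smul, smul_left, smul_right, ← mul_assoc, ← mul_inv,
    Real.mul_self_sqrt n.cast_nonneg]

theorem apply_sum_nuLast_smul (hB : ∀ a b, B a b = B b a) (hn : 0 < n) (x : Fin n → 𝔨) :
    B (∑ j, nuLast n j • x j) (∑ j, nuLast n j • x j)
      = (B (∑ j, x j) (∑ j, x j) - 2 * n * B (∑ j, x j) (x ⟨n - 1, by omega⟩)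
          + n ^ 2 * B (x ⟨n - 1, by omega⟩) (x ⟨n - 1, by omega⟩)) / (n ^ 2 - n) := by
  have hdisc : (0 : ℝ) ≤ (n : ℝ) ^ 2 - n := by
    have : (1 : ℝ) ≤ n := by exact_mod_cast hn
    nlinarith
  rw [sum_nuLast_smul hn, smul_left, smul_right, ← mul_assoc, ← mul_inv,
    Real.mul_self_sqrt hdisc]
  simp only [map_sub, map_smul, LinearMap.sub_apply, LinearMap.smul_apply, smul_eq_mul,
    hB (x _) (∑ j, x j)]
  ring

end LinearMap.BilinForm

end UnitVectors

/-- The Hamiltonian of the metric `ds²_{p,q,s}` in the form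
`ĥ(x) = (s/2)⟨pr_𝔥 x, pr_𝔥 x⟩ + (p/2)⟨x - pr_𝔥 x - pr_{𝔳_{n-1}} x, ·⟩
      + (q/2)⟨pr_{𝔳_{n-1}} x, ·⟩`,
where `𝔳_{n-1} = 𝔨_{ν}` with `ν = (1,…,1,-(n-1))/√(n²-n)`, equals
`(p/2)∑_{k<n-1}⟨x_k,x_k⟩ + ½(qn/(n-1) - p/(n-1))⟨xₙ,xₙ⟩
  + ½(s/n - p/(n-1) + q/(n²-n))⟨μ,μ⟩ + (p/(n-1) - q/(n-1))⟨μ,xₙ⟩`,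
with `μ = x₁+⋯+xₙ`. -/
theorem einstein_hamiltonian_identity
    {𝔨 : Type*} [AddCommGroup 𝔨] [Module ℝ 𝔨]
    (B : LinearMap.BilinForm ℝ 𝔨)
    (hsymm : ∀ a b : 𝔨, B a b = B b a)
    (n : ℕ) (hn : 2 ≤ n) (p q s : ℝ) (x : Fin n → 𝔨) :
    let μ : 𝔨 := ∑ i, x i
    let prh : Fin n → 𝔨 := fun _ => (n : ℝ)⁻¹ • μ
    let ν : Fin n → ℝ := fun i =>
      if (i : ℕ) < n - 1 then 1 / Real.sqrt ((n : ℝ) ^ 2 - n)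
      else -((n : ℝ) - 1) / Real.sqrt ((n : ℝ) ^ 2 - n)
    let prv : Fin n → 𝔨 := fun i => ν i • ∑ j, ν j • x j
    let xn : 𝔨 := x ⟨n - 1, by omega⟩
    s / 2 * (∑ i, B (prh i) (prh i))
      + p / 2 * (∑ i, B (x i - prh i - prv i) (x i - prh i - prv i))
      + q / 2 * (∑ i, B (prv i) (prv i))
    = p / 2 * (∑ i ∈ Finset.univ.filter fun i : Fin n => (i : ℕ) < n - 1, B (x i) (x i))
      + 1 / 2 * (q * n / ((n : ℝ) - 1) - p / ((n : ℝ) - 1)) * B xn xn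
      + 1 / 2 * (s / n - p / ((n : ℝ) - 1) + q / ((n : ℝ) ^ 2 - n)) * B μ μ
      + (p / ((n : ℝ) - 1) - q / ((n : ℝ) - 1)) * B μ xn := by
  intro μ prh ν prv xn
  have hprh : prh = lineProj (nuDiag n) x := (lineProj_nuDiag x).symm
  have hprv : prv = lineProj (nuLast n) x := rfl
  have hh := B.pi_lineProj_lineProj (nuDiag n) (nuDiag n) x
  have hv := B.pi_lineProj_lineProj (nuLast n) (nuLast n) x
  have hhv := B.pi_sub_lineProj_sub_lineProj hsymm (sum_nuDiag_mul_self (by omega))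
    (sum_nuLast_mul_self hn) (sum_nuDiag_mul_nuLast (by omega)) x
  simp only [LinearMap.BilinForm.pi_apply, Pi.sub_apply] at hh hv hhv
  have hw₀ : B (∑ j, nuDiag n j • x j) (∑ j, nuDiag n j • x j) = (n : ℝ)⁻¹ * B μ μ :=
    B.apply_sum_nuDiag_smul x
  have hw : B (∑ j, nuLast n j • x j) (∑ j, nuLast n j • x j)
      = (B μ μ - 2 * n * B μ xn + n ^ 2 * B xn xn) / (n ^ 2 - n) :=
    B.apply_sum_nuLast_smul hsymm (by omega) x
  have hsplit : ∑ i, B (x i) (x i)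
      = ∑ i ∈ univ.filter fun i : Fin n => (i : ℕ) < n - 1, B (x i) (x i) + B xn xn :=
    sum_eq_sum_filter_lt_pred_add (by omega) _
  have hn1 : (n : ℝ) - 1 ≠ 0 := (sub_pos.2 (by exact_mod_cast hn)).ne'
  rw [hprh, hprv, hh, hv, hhv, sum_nuDiag_mul_self (by omega), sum_nuLast_mul_self hn, hw₀, hw,
    hsplit]
  field_simp
  ring
end
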